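/- For all 1 ≤ p ≤ k ≤ N, writing v := s_{i_{p+1}} s_{i_{p+2}} ⋯ s_{i_k} Λ_{i_k} ∈ ℤ^{n+1}, one has v_{i_p} − v_{i_p+1} = 1 if j^p ≤ j^k and v_{i_p} − v_{i_p+1} = 0 if j^p > j^k. Equivalently, for every k ∈ [1,N] the k-th column of the matrix M_𝐢 equals the vector b_k. -/

import Mathlib

namespace Stmt6

/-- Row index (1-indexed) of the box labeled `p` in the `t × U` rectangle. -/
def ibox (U p : ℕ) : ℕ := (p - 1) / U + 1

/-- Column index (1-indexed) of the box labeled `p`. -/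
def jbox (U p : ℕ) : ℕ := (p - 1) % U + 1

/-- The residue `res(i,j) = t - i + j`. -/
def res (t i j : ℕ) : ℕ := t + j - i

/-- The word `i_p = res(i^p, j^p)`. -/
def iword (t U p : ℕ) : ℕ := res t (ibox U p) (jbox U p)

/-- `Λ_m = e_1 + ⋯ + e_m` of `ℤ^{n+1}`, with 1-indexed coordinates. -/
def Lam (m : ℕ) : ℕ → ℤ := fun x => if 1 ≤ x ∧ x ≤ m then 1 else 0

/-- The simple reflection `s_r` acting on vectors by exchanging coordinates `r`, `r+1`. -/
def sAct (r : ℕ) (v : ℕ → ℤ) : ℕ → ℤ := fun x =>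
  if x = r then v (r + 1) else if x = r + 1 then v r else v x

def applySeq : List ℕ → (ℕ → ℤ) → ℕ → ℤ
  | [], v => v
  | r :: rs, v => sAct r (applySeq rs v)

/-- `s_{i_{p+1}} s_{i_{p+2}} ⋯ s_{i_k} Λ_{i_k}`. -/
def Nfrak (t U p k : ℕ) : ℕ → ℤ :=
  applySeq ((List.range (k - p)).map fun a => iword t U (p + 1 + a)) (Lam (iword t U k))

/-- The matrix `M_𝐢`: `m_{p,q} = (s_{i_{p+1}}⋯s_{i_q}Λ_{i_q})_{i_p}
- (s_{i_{p+1}}⋯s_{i_q}Λ_{i_q})_{i_p+1}` for `p ≤ q`, and `0` for `p > q`. -/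
def Ment (t U p q : ℕ) : ℤ :=
  if p ≤ q then Nfrak t U p q (iword t U p) - Nfrak t U p q (iword t U p + 1) else 0

/-- The 0/1 vector `b_k`: `p`-th entry is `1` iff `i^p ≤ i^k` and `j^p ≤ j^k`. -/
def bvec (U k p : ℕ) : ℤ :=
  if ibox U p ≤ ibox U k ∧ jbox U p ≤ jbox U k then 1 else 0

lemma step_a (U m : ℕ) (h : m % U + 1 < U) : (m+1)/U = m/U ∧ (m+1)%U = m%U+1 := by
  have hd := Nat.div_add_mod m U
  have heq : m + 1 = (m % U + 1) + U * (m / U) := by omega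
  refine ⟨?_, ?_⟩
  · rw [heq, Nat.add_mul_div_left _ _ (by omega : 0 < U), Nat.div_eq_of_lt h, Nat.zero_add]
  · rw [heq, Nat.add_mul_mod_self_left, Nat.mod_eq_of_lt h]

lemma step_b (U m : ℕ) (hU : 0 < U) (h : m % U + 1 = U) : (m+1)/U = m/U + 1 ∧ (m+1)%U = 0 := by
  have hd := Nat.div_add_mod m U
  have hx : U * (m/U + 1) = U * (m/U) + U := by ring
  have heq : m + 1 = 0 + U * (m/U + 1) := by omega
  rw [heq, Nat.add_mul_div_left _ _ hU, Nat.add_mul_mod_self_left]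
  simp

lemma jbox_le (U p : ℕ) (hU : 1 ≤ U) : jbox U p ≤ U := by
  have := Nat.mod_lt (p-1) (show 0 < U by omega)
  unfold jbox; omega

lemma jbox_pos (U p : ℕ) : 1 ≤ jbox U p := Nat.le_add_left 1 _
lemma ibox_pos (U p : ℕ) : 1 ≤ ibox U p := Nat.le_add_left 1 _

lemma ibox_mono (U p k : ℕ) (h : p ≤ k) : ibox U p ≤ ibox U k := by
  unfold ibox
  have := Nat.div_le_div_right (c := U) (show p - 1 ≤ k - 1 by omega)
  omega

lemma ibox_le_t (t U k : ℕ) (hU : 1 ≤ U) (hk1 : 1 ≤ k) (hk : k ≤ t * U) : ibox U k ≤ t := by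
  rcases Nat.eq_zero_or_pos k with h | h
  · omega
  · have h1 : k - 1 < t * U := by omega
    have h2 : (k - 1) / U < t := Nat.div_lt_of_lt_mul (by rw [Nat.mul_comm]; exact h1)
    unfold ibox; omega

lemma box_decomp (U p : ℕ) : p - 1 = U * (ibox U p - 1) + (jbox U p - 1) := by
  unfold ibox jbox
  simp only [Nat.add_sub_cancel]
  have := Nat.div_add_mod (p - 1) U
  omega

lemma succ_same_row (U p : ℕ) (hp : 1 ≤ p) (h : jbox U p < U) :
    ibox U (p+1) = ibox U p ∧ jbox U (p+1) = jbox U p + 1 := by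
  have h2 : (p - 1) % U + 1 < U := h
  have := step_a U (p-1) h2
  have hq : p + 1 - 1 = (p-1) + 1 := by omega
  unfold ibox jbox
  rw [hq]
  omega

lemma succ_next_row (U p : ℕ) (hU : 1 ≤ U) (hp : 1 ≤ p) (h : jbox U p = U) :
    ibox U (p+1) = ibox U p + 1 ∧ jbox U (p+1) = 1 := by
  have h2 : (p - 1) % U + 1 = U := h
  have := step_b U (p-1) (by omega) h2
  have hq : p + 1 - 1 = (p-1) + 1 := by omega
  unfold ibox jbox
  rw [hq]
  omega

lemma Nfrak_self (t U k : ℕ) : Nfrak t U k k = Lam (iword t U k) := by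
  unfold Nfrak
  rw [Nat.sub_self]
  rfl

lemma Nfrak_succ (t U p k : ℕ) (h : p < k) :
    Nfrak t U p k = sAct (iword t U (p+1)) (Nfrak t U (p+1) k) := by
  unfold Nfrak
  have h1 : k - p = (k - (p+1)) + 1 := by omega
  rw [h1, List.range_succ_eq_map, List.map_cons, List.map_map]
  have h2 : ((fun a => iword t U (p + 1 + a)) ∘ (· + 1)) = fun a => iword t U (p + 1 + 1 + a) := by
    funext a
    have : p + 1 + (a + 1) = p + 1 + 1 + a := by omega
    simp [this]
  rw [h2]
  simp [applySeq]

/-- The closed form for `Nfrak`. -/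
def target (t U p k x : ℕ) : ℤ :=
  if (1 ≤ x ∧ x ≤ t - ibox U k) ∨
     (t + 1 - ibox U p ≤ x ∧
       x ≤ t + jbox U k - ibox U p + (if jbox U p ≤ jbox U k then 1 else 0) ∧
       x ≠ iword t U p + 1)
  then 1 else 0

lemma key (t U : ℕ) (hU : 1 ≤ U) :
    ∀ d p k, k = p + d → 1 ≤ p → k ≤ t * U → ∀ x,
      Nfrak t U p k x = target t U p k x := by
  intro d
  induction d with
  | zero =>
    intro p k hk hp hkN x
    obtain rfl : k = p := by omega
    rw [Nfrak_self]
    have h1 : ibox U k ≤ t := ibox_le_t t U k hU hp hkN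
    have h2 : jbox U k ≤ U := jbox_le U k hU
    have h3 : 1 ≤ jbox U k := jbox_pos U k
    have h4 : 1 ≤ ibox U k := ibox_pos U k
    simp only [target, Lam, iword, res, le_refl, ↓reduceIte]
    split_ifs <;> omega
  | succ d ih =>
    intro p k hk hp hkN x
    have hpk : p < k := by omega
    have hIH : ∀ y, Nfrak t U (p+1) k y = target t U (p+1) k y :=
      ih (p+1) k (by omega) (by omega) hkN
    rw [Nfrak_succ t U p k hpk]
    simp only [sAct, hIH]
    -- gather facts
    have hik : ibox U k ≤ t := ibox_le_t t U k hU (by omega) hkN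
    have hm1 : ibox U (p+1) ≤ ibox U k := ibox_mono U (p+1) k (by omega)
    have hm0 : ibox U p ≤ ibox U (p+1) := ibox_mono U p (p+1) (by omega)
    have hjU : jbox U p ≤ U := jbox_le U p hU
    have hj1 : 1 ≤ jbox U p := jbox_pos U p
    have hi1 : 1 ≤ ibox U p := ibox_pos U p
    have hjk1 : 1 ≤ jbox U k := jbox_pos U k
    have hjkU : jbox U k ≤ U := jbox_le U k hU
    rcases lt_or_eq_of_le hjU with hcase | hcase
    · obtain ⟨ha, hb⟩ := succ_same_row U p hp hcase
      simp only [target, iword, res, ha, hb]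
      split_ifs <;> omega
    · obtain ⟨ha, hb⟩ := succ_next_row U p hU hp hcase
      simp only [target, iword, res, ha, hb]
      split_ifs <;> omega



theorem stmt6 (n t : ℕ) (hn : 1 ≤ n) (ht1 : 1 ≤ t) (htn : t ≤ n) :
    (∀ p k, 1 ≤ p → p ≤ k → k ≤ t * (n - t + 1) →
      Nfrak t (n - t + 1) p k (iword t (n - t + 1) p)
          - Nfrak t (n - t + 1) p k (iword t (n - t + 1) p + 1)
        = if jbox (n - t + 1) p ≤ jbox (n - t + 1) k then 1 else 0) ∧
    (∀ k p, 1 ≤ k → k ≤ t * (n - t + 1) → 1 ≤ p → p ≤ t * (n - t + 1) →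
      Ment t (n - t + 1) p k = bvec (n - t + 1) k p) := by
  set U := n - t + 1 with hUdef
  have hU : 1 ≤ U := by omega
  have P1 : ∀ p k, 1 ≤ p → p ≤ k → k ≤ t * U →
      Nfrak t U p k (iword t U p) - Nfrak t U p k (iword t U p + 1)
        = if jbox U p ≤ jbox U k then 1 else 0 := by
    intro p k hp hpk hkN
    have hkey := key t U hU (k - p) p k (by omega) hp hkN
    rw [hkey, hkey]
    have hik : ibox U k ≤ t := ibox_le_t t U k hU (by omega) hkN
    have hm : ibox U p ≤ ibox U k := ibox_mono U p k hpk
    have hjU : jbox U p ≤ U := jbox_le U p hU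
    have hj1 : 1 ≤ jbox U p := jbox_pos U p
    have hi1 : 1 ≤ ibox U p := ibox_pos U p
    have hjk1 : 1 ≤ jbox U k := jbox_pos U k
    simp only [target, iword, res]
    split_ifs <;> omega
  refine ⟨P1, ?_⟩
  intro k p hk1 hkN hp1 hpN
  by_cases h : p ≤ k
  · rw [Ment, if_pos h, P1 p k hp1 h hkN, bvec]
    have hm : ibox U p ≤ ibox U k := ibox_mono U p k h
    split_ifs with h1 h2 h2 <;> first
      | rfl
      | (exfalso; omega)
      | (exfalso; exact h1 h2.2)
      | (exfalso; exact h2 ⟨hm, h1⟩)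
  · rw [Ment, if_neg h, bvec, if_neg]
    rintro ⟨hii, hjj⟩
    have hd1 := box_decomp U p
    have hd2 := box_decomp U k
    have hmul := Nat.mul_le_mul_left U (show ibox U p - 1 ≤ ibox U k - 1 by omega)
    omega


end Stmt6
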